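/- arXiv:2001.08902 — 5 statements merged into one kernel-verified Lean document; each statement's English description precedes it below -/
import Mathlib

section
/- Let J, R, E be real n×n matrices with J skew-symmetric, and R, E symmetric positive semidefinite. The matrix pencil λE − (J − R) is singular (i.e., det(λE − (J − R)) = 0 as a polynomial in λ) if and only if ker J ∩ ker E ∩ ker R ≠ {0}. -/
/-!
Evaluating the pencil at `λ = 1`, a singular pencil gives `v ≠ 0` with `(E + R - J) v = 0`.
Since `J` is skew, `vᵀ J v = 0`, so `vᵀ E v + vᵀ R v = 0`; both terms are nonnegative, hence
zero, and for positive semidefinite matrices this forces `E v = R v = 0`, and then `J v = 0`.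
Conversely a common kernel vector `x` is a kernel vector of the polynomial matrix
`X • E - (J - R)` over the domain `ℝ[X]`.
-/

open Matrix Polynomial

open scoped ComplexOrder

namespace Matrix

variable {ι : Type*} [Fintype ι]

theorem dotProduct_mulVec_self_eq_zero_of_transpose_eq_neg {α : Type*} [CommRing α]
    [IsAddTorsionFree α] {J : Matrix ι ι α} (hJ : Jᵀ = -J) (v : ι → α) :
    v ⬝ᵥ J *ᵥ v = 0 := by
  rw [← self_eq_neg]
  calc v ⬝ᵥ J *ᵥ v = Jᵀ *ᵥ v ⬝ᵥ v := by rw [dotProduct_mulVec, ← mulVec_transpose]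
    _ = -(v ⬝ᵥ J *ᵥ v) := by rw [hJ, neg_mulVec, neg_dotProduct, dotProduct_comm]

theorem PosSemidef.mulVec_eq_zero_of_dotProduct_add_eq_zero {𝕜 : Type*} [RCLike 𝕜]
    {A B : Matrix ι ι 𝕜} (hA : A.PosSemidef) (hB : B.PosSemidef) {v : ι → 𝕜}
    (h : star v ⬝ᵥ A *ᵥ v + star v ⬝ᵥ B *ᵥ v = 0) : A *ᵥ v = 0 ∧ B *ᵥ v = 0 := by
  obtain ⟨hA₀, hB₀⟩ := (add_eq_zero_iff_of_nonneg (hA.dotProduct_mulVec_nonneg v)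
    (hB.dotProduct_mulVec_nonneg v)).mp h
  exact ⟨(hA.dotProduct_mulVec_zero_iff v).mp hA₀, (hB.dotProduct_mulVec_zero_iff v).mp hB₀⟩

theorem mulVec_eq_zero_of_sub_sub_mulVec_eq_zero {E J R : Matrix ι ι ℝ} (hJ : Jᵀ = -J)
    (hE : E.PosSemidef) (hR : R.PosSemidef) {v : ι → ℝ} (h : (E - (J - R)) *ᵥ v = 0) :
    J *ᵥ v = 0 ∧ E *ᵥ v = 0 ∧ R *ᵥ v = 0 := by
  have hsplit : (E - (J - R)) *ᵥ v = E *ᵥ v + R *ᵥ v - J *ᵥ v := by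
    simp only [sub_mulVec]
    abel
  have hquad : star v ⬝ᵥ E *ᵥ v + star v ⬝ᵥ R *ᵥ v = 0 := by
    have := congrArg (v ⬝ᵥ ·) (hsplit.symm.trans h)
    simpa only [star_trivial, dotProduct_sub, dotProduct_add, dotProduct_zero,
      dotProduct_mulVec_self_eq_zero_of_transpose_eq_neg hJ v, sub_zero] using this
  obtain ⟨hEv, hRv⟩ := hE.mulVec_eq_zero_of_dotProduct_add_eq_zero hR hquad
  refine ⟨?_, hEv, hRv⟩
  rwa [hsplit, hEv, hRv, add_zero, zero_sub, neg_eq_zero] at h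

variable [DecidableEq ι] {α : Type*} [CommRing α]

theorem eval_det_X_smul_map_C_sub_map_C (A B : Matrix ι ι α) (t : α) :
    ((X : α[X]) • A.map C - B.map C).det.eval t = (t • A - B).det := by
  rw [← coe_evalRingHom, RingHom.map_det]
  congr 1
  ext i j
  simpa using mul_comm _ _

theorem det_X_smul_map_C_sub_map_C_eq_zero [IsDomain α] {A B : Matrix ι ι α} {x : ι → α}
    (hx : x ≠ 0) (hA : A *ᵥ x = 0) (hB : B *ᵥ x = 0) :
    ((X : α[X]) • A.map C - B.map C).det = 0 := by
  refine exists_mulVec_eq_zero_iff.mp ⟨C ∘ x, ?_, ?_⟩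
  · exact fun h ↦ hx (funext fun i ↦ C_injective (by simpa using congrFun h i))
  · ext i
    simp only [sub_mulVec, smul_mulVec, Pi.sub_apply, Pi.smul_apply, ← RingHom.map_mulVec,
      hA, hB, Pi.zero_apply, map_zero, smul_zero, sub_zero]

end Matrix

theorem dH_pencil_singular_iff_common_kernel
    (n : ℕ) (E J R : Matrix (Fin n) (Fin n) ℝ)
    (hJ : Jᵀ = -J) (hE : E.PosSemidef) (hR : R.PosSemidef) :
    ((X : ℝ[X]) • E.map C - (J - R).map C).det = 0 ↔
      ∃ x : Fin n → ℝ, x ≠ 0 ∧ J.mulVec x = 0 ∧ E.mulVec x = 0 ∧ R.mulVec x = 0 := by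
  constructor
  · intro hdet
    have hdet₁ : (E - (J - R)).det = 0 := by
      simpa [eval_det_X_smul_map_C_sub_map_C] using congrArg (eval 1) hdet
    obtain ⟨v, hv, hmul⟩ := exists_mulVec_eq_zero_iff.mpr hdet₁
    exact ⟨v, hv, mulVec_eq_zero_of_sub_sub_mulVec_eq_zero hJ hE hR hmul⟩
  · rintro ⟨x, hx, hJx, hEx, hRx⟩
    exact det_X_smul_map_C_sub_map_C_eq_zero hx hEx (by rw [sub_mulVec, hJx, hRx, sub_zero])
end

section
/- Let P(λ) = −λʲ J + Σ_{i=0}^{k} λⁱ A_i where J is real skew-symmetric of size n×n and each A_i is real symmetric positive semidefinite of size n×n, with 0 ≤ j ≤ k. Then det P(λ) is identically zero (as a polynomial in λ) if and only if the matrix P(1) = −J + A₀ + ⋯ + A_k is singular. -/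
open Matrix Polynomial

/-! If `(-J + ∑ Aᵢ) v = 0`, pairing with `v` kills the skew part, leaving `∑ vᵀ Aᵢ v = 0`; each term
is nonnegative, so every `Aᵢ v = 0`, and then `J v = 0` too. Thus `v` is a common kernel vector of
all coefficients, hence a constant kernel vector of `P(λ)`, and `det P = 0` over the domain `ℝ[X]`.
The converse is evaluation at `λ = 1`. -/

theorem Matrix.dotProduct_mulVec_self_eq_zero_of_transpose_eq_neg_s4 {n R : Type*} [Fintype n]
    [CommRing R] [NoZeroDivisors R] [CharZero R] {J : Matrix n n R} (hJ : Jᵀ = -J) (v : n → R) :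
    v ⬝ᵥ J *ᵥ v = 0 := by
  refine self_eq_neg.mp ?_
  calc v ⬝ᵥ J *ᵥ v = (Jᵀ *ᵥ v) ⬝ᵥ v := by rw [dotProduct_mulVec, mulVec_transpose]
    _ = -(v ⬝ᵥ J *ᵥ v) := by rw [hJ, neg_mulVec, neg_dotProduct, dotProduct_comm]

theorem Matrix.mulVec_eq_zero_of_neg_add_sum_mulVec_eq_zero {n ι : Type*} [Fintype n]
    {s : Finset ι} {J : Matrix n n ℝ} {A : ι → Matrix n n ℝ} (hJ : Jᵀ = -J)
    (hA : ∀ i ∈ s, (A i).PosSemidef) {v : n → ℝ} (hv : (-J + ∑ i ∈ s, A i) *ᵥ v = 0) :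
    J *ᵥ v = 0 ∧ ∀ i ∈ s, A i *ᵥ v = 0 := by
  have hquad : ∑ i ∈ s, v ⬝ᵥ A i *ᵥ v = 0 := by
    have := congrArg (v ⬝ᵥ ·) hv
    simpa [add_mulVec, neg_mulVec, sum_mulVec, dotProduct_sum,
      dotProduct_mulVec_self_eq_zero_of_transpose_eq_neg_s4 hJ] using this
  have hAv : ∀ i ∈ s, A i *ᵥ v = 0 := fun i hi => by
    refine ((hA i hi).dotProduct_mulVec_zero_iff v).mp ?_
    refine (Finset.sum_eq_zero_iff_of_nonneg (fun i hi => ?_)).mp hquad i hi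
    simpa using (hA i hi).dotProduct_mulVec_nonneg v
  refine ⟨?_, hAv⟩
  rw [add_mulVec, neg_mulVec, sum_mulVec, Finset.sum_eq_zero hAv] at hv
  simpa using hv

theorem Matrix.map_C_mulVec_comp_C {n R : Type*} [Fintype n] [CommSemiring R]
    (M : Matrix n n R) (v : n → R) : M.map C *ᵥ (C ∘ v) = C ∘ (M *ᵥ v) := by
  funext i
  exact (RingHom.map_mulVec C M v i).symm

theorem structured_poly_singular_iff_P_one_singular_general
    (n k j : ℕ)
    (J : Matrix (Fin n) (Fin n) ℝ) (A : Fin (k + 1) → Matrix (Fin n) (Fin n) ℝ)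
    (hJ : Jᵀ = -J) (hA : ∀ i, (A i).PosSemidef) :
    (-((X : ℝ[X]) ^ j • J.map C) + ∑ i : Fin (k + 1), (X : ℝ[X]) ^ (i : ℕ) • (A i).map C).det = 0 ↔
      (-J + ∑ i, A i).det = 0 := by
  constructor
  · intro h
    have hP1 := congrArg (eval 1) h
    rw [← coe_evalRingHom, RingHom.map_det, map_zero] at hP1
    convert hP1 using 2
    ext a b
    simp [Matrix.sum_apply, eval_finsetSum]
  · intro h
    obtain ⟨v, hv, hPv⟩ := exists_mulVec_eq_zero_iff.mpr h
    obtain ⟨hJv, hAv⟩ := mulVec_eq_zero_of_neg_add_sum_mulVec_eq_zero hJ (fun i _ => hA i) hPv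
    refine exists_mulVec_eq_zero_iff.mp ⟨C ∘ v, ?_, ?_⟩
    · exact fun h0 => hv (funext fun a => C_injective (by simpa using congrFun h0 a))
    · simp [add_mulVec, neg_mulVec, sum_mulVec, smul_mulVec, map_C_mulVec_comp_C, hJv,
        hAv _ (Finset.mem_univ _)]

theorem structured_poly_singular_iff_P_one_singular
    (n k j : ℕ) (hjk : j ≤ k)
    (J : Matrix (Fin n) (Fin n) ℝ) (A : Fin (k + 1) → Matrix (Fin n) (Fin n) ℝ)
    (hJ : Jᵀ = -J) (hA : ∀ i, (A i).PosSemidef) :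
    (-((X : ℝ[X]) ^ j • J.map C) + ∑ i : Fin (k + 1), (X : ℝ[X]) ^ (i : ℕ) • (A i).map C).det = 0 ↔
      (-J + ∑ i, A i).det = 0 :=
  structured_poly_singular_iff_P_one_singular_general n k j J A hJ hA
end

section
/- If Y is a real symmetric positive semidefinite n×n matrix and u is a unit vector, then with Δ_Y^u = −uuᵀY − Yuuᵀ + uuᵀYuuᵀ, the matrix Y + Δ_Y^u is again symmetric positive semidefinite, and ‖Δ_Y^u‖_F² = 2‖(I − uuᵀ)Yu‖₂² + (uᵀYu)². -/
/-!
Write `P = uuᵀ`. Then `Y + Δ_Y^u = (1 - P) Y (1 - P)` is a congruence of `Y`, hence positive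
semidefinite. With `v = Yu`, `α = uᵀv` and `w = (1 - P) v = v - αu`, which is orthogonal to `u`,
one has `Δ_Y^u = -(uwᵀ + wuᵀ + α uuᵀ)`; the three rank-one terms are pairwise orthogonal in the
Frobenius inner product, with squared norms `‖w‖²`, `‖w‖²` and `α²`.
-/

open Matrix

section

variable {ι R : Type*} [CommRing R]

lemma sum_sum_sq_vecMulVec_add_vecMulVec_add_smul [Fintype ι] {u w : ι → R} (hu : u ⬝ᵥ u = 1)
    (huw : u ⬝ᵥ w = 0) (a : R) :
    ∑ i, ∑ j, (vecMulVec u w + vecMulVec w u + a • vecMulVec u u) i j ^ 2 =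
      2 * (w ⬝ᵥ w) + a ^ 2 := by
  have expand : ∀ i j, (vecMulVec u w + vecMulVec w u + a • vecMulVec u u) i j ^ 2 =
      u i * u i * (w j * w j) + w i * w i * (u j * u j) + 2 * (u i * w i * (u j * w j)) +
        2 * a * (u i * u i * (u j * w j)) + 2 * a * (u i * w i * (u j * u j)) +
        a ^ 2 * (u i * u i * (u j * u j)) := fun i j => by
    simp only [Matrix.add_apply, Matrix.smul_apply, vecMulVec_apply, smul_eq_mul]
    ring
  simp only [dotProduct] at hu huw ⊢
  simp only [expand, Finset.sum_add_distrib, ← Finset.mul_sum, ← Finset.sum_mul, hu, huw]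
  ring

variable [DecidableEq ι]

lemma transpose_one_sub_vecMulVec_self (u : ι → R) :
    (1 - vecMulVec u u)ᵀ = 1 - vecMulVec u u := by
  rw [transpose_sub, transpose_one, transpose_vecMulVec]

variable [Fintype ι]

lemma one_sub_vecMulVec_self_mulVec (u v : ι → R) :
    (1 - vecMulVec u u) *ᵥ v = v - (u ⬝ᵥ v) • u := by
  rw [sub_mulVec, one_mulVec, vecMulVec_mulVec, op_smul_eq_smul]

lemma dotProduct_one_sub_vecMulVec_self_mulVec {u : ι → R} (hu : u ⬝ᵥ u = 1) (v : ι → R) :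
    u ⬝ᵥ ((1 - vecMulVec u u) *ᵥ v) = 0 := by
  rw [one_sub_vecMulVec_self_mulVec, dotProduct_sub, dotProduct_smul, hu, smul_eq_mul, mul_one,
    sub_self]

lemma neg_vecMulVec_self_mul_sub_mul_vecMulVec_self_add {Y : Matrix ι ι R} (hY : Y.IsSymm)
    (u : ι → R) :
    -(vecMulVec u u * Y) - Y * vecMulVec u u + vecMulVec u u * Y * vecMulVec u u =
      -(vecMulVec u ((1 - vecMulVec u u) *ᵥ (Y *ᵥ u)) +
        vecMulVec ((1 - vecMulVec u u) *ᵥ (Y *ᵥ u)) u + (u ⬝ᵥ Y *ᵥ u) • vecMulVec u u) := by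
  have hYu : u ᵥ* Y = Y *ᵥ u := by rw [← vecMul_transpose, hY.eq]
  rw [one_sub_vecMulVec_self_mulVec, vecMulVec_mul, mul_vecMulVec, vecMulVec_mul_vecMulVec, hYu,
    dotProduct_comm (Y *ᵥ u), vecMulVec_sub, sub_vecMulVec, vecMulVec_smul, smul_vecMulVec]
  abel

lemma Matrix.PosSemidef.one_sub_vecMulVec_self_mul_mul
    [PartialOrder R] [StarRing R] [TrivialStar R]
    {Y : Matrix ι ι R} (hY : Y.PosSemidef) (u : ι → R) :
    ((1 - vecMulVec u u) * Y * (1 - vecMulVec u u)).PosSemidef := by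
  have h := hY.mul_mul_conjTranspose_same (1 - vecMulVec u u)
  rwa [conjTranspose_eq_transpose_of_trivial, transpose_one_sub_vecMulVec_self] at h

end

theorem perturbation_psd
    (n : ℕ) (Y : Matrix (Fin n) (Fin n) ℝ) (hY : Y.PosSemidef)
    (u : Fin n → ℝ) (hu : u ⬝ᵥ u = 1) :
    (Y + (-(vecMulVec u u * Y) - Y * vecMulVec u u +
        vecMulVec u u * Y * vecMulVec u u)).PosSemidef ∧
      (∑ i, ∑ j, ((-(vecMulVec u u * Y) - Y * vecMulVec u u +
        vecMulVec u u * Y * vecMulVec u u) i j) ^ 2) =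
      2 * (∑ i, (((1 - vecMulVec u u).mulVec (Y.mulVec u)) i) ^ 2) +
        (u ⬝ᵥ Y.mulVec u) ^ 2 := by
  constructor
  · have hconj : Y + (-(vecMulVec u u * Y) - Y * vecMulVec u u +
        vecMulVec u u * Y * vecMulVec u u) = (1 - vecMulVec u u) * Y * (1 - vecMulVec u u) := by
      noncomm_ring
    rw [hconj]
    exact hY.one_sub_vecMulVec_self_mul_mul u
  · rw [neg_vecMulVec_self_mul_sub_mul_vecMulVec_self_add
      (isHermitian_iff_isSymm.mp hY.isHermitian)]
    simp only [Matrix.neg_apply, neg_sq]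
    rw [sum_sum_sq_vecMulVec_add_vecMulVec_add_smul hu
      (dotProduct_one_sub_vecMulVec_self_mulVec hu _)]
    simp only [dotProduct, sq]
end

section
/- Let Y ∈ ℝ^{n×n}, u a unit vector, and Δ_Y^u = −uuᵀY − Yuuᵀ + uuᵀYuuᵀ. Then rank Δ_Y^u ≤ 1 if and only if u is a right eigenvector of Y (Yu ∈ span(u)) or a left eigenvector of Y (Yᵀu ∈ span(u)). -/
/-!
Write `Δ = -(u vᵀ + w uᵀ)` with `w = Y u` and `v = Yᵀu - (uᵀYu) u`, so that `v ⟂ u`.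
Then `M = u vᵀ + w uᵀ` sends `u` to `w` and `v` to `‖v‖² u`: if `v ≠ 0` and `w ∉ span u`, the
range of `M` contains the independent pair `u, w` and `rank M ≥ 2`. Conversely, if `v = 0` or
`w = c u`, then `M` is the single outer product `w uᵀ` or `u (v + c u)ᵀ`.
-/

open Matrix

namespace Matrix

theorem rank_neg {m n R : Type*} [Fintype n] [CommRing R] (M : Matrix m n R) :
    (-M).rank = M.rank := by
  have : (-M).mulVecLin = -M.mulVecLin := by ext; simp
  rw [rank, rank, this, LinearMap.range_neg]

variable {ι K : Type*} [Fintype ι] [Field K]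

theorem two_le_rank_of_linearIndependent {m : Type*} (A : Matrix m ι K) {x y : m → K}
    (hx : x ∈ LinearMap.range A.mulVecLin) (hy : y ∈ LinearMap.range A.mulVecLin)
    (hxy : LinearIndependent K ![x, y]) : 2 ≤ A.rank := by
  let b : Fin 2 → LinearMap.range A.mulVecLin := ![⟨x, hx⟩, ⟨y, hy⟩]
  have hb : LinearIndependent K b := by
    refine LinearIndependent.of_comp (LinearMap.range A.mulVecLin).subtype ?_
    convert hxy using 1
    ext i : 1
    fin_cases i <;> rfl
  simpa [rank] using hb.fintype_card_le_finrank

theorem dotProduct_sub_dotProduct_smul_eq_zero {u : ι → K} (hu : u ⬝ᵥ u = 1) (x : ι → K) :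
    u ⬝ᵥ (x - (x ⬝ᵥ u) • u) = 0 := by
  rw [dotProduct_sub, dotProduct_smul, hu, dotProduct_comm, smul_eq_mul, mul_one, sub_self]

theorem sub_dotProduct_smul_eq_zero_iff {u : ι → K} (hu : u ⬝ᵥ u = 1) (x : ι → K) :
    x - (x ⬝ᵥ u) • u = 0 ↔ ∃ c : K, x = c • u := by
  refine ⟨fun h => ⟨x ⬝ᵥ u, sub_eq_zero.mp h⟩, ?_⟩
  rintro ⟨c, rfl⟩
  rw [smul_dotProduct, hu, smul_eq_mul, mul_one, sub_self]

theorem vecMulVec_add_vecMulVec_mulVec_left {u v : ι → K} (huv : u ⬝ᵥ v = 0) (w : ι → K) :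
    (vecMulVec u v + vecMulVec w u) *ᵥ u = (u ⬝ᵥ u) • w := by
  simp [add_mulVec, vecMulVec_mulVec, dotProduct_comm v u, huv]

theorem vecMulVec_add_vecMulVec_mulVec_right {u v : ι → K} (huv : u ⬝ᵥ v = 0) (w : ι → K) :
    (vecMulVec u v + vecMulVec w u) *ᵥ v = (v ⬝ᵥ v) • u := by
  simp [add_mulVec, vecMulVec_mulVec, huv]

theorem rank_vecMulVec_add_vecMulVec_le_one_iff [LinearOrder K] [IsStrictOrderedRing K]
    {u v : ι → K} (w : ι → K) (hu : u ≠ 0) (huv : u ⬝ᵥ v = 0) :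
    (vecMulVec u v + vecMulVec w u).rank ≤ 1 ↔ v = 0 ∨ ∃ c : K, w = c • u := by
  set M := vecMulVec u v + vecMulVec w u
  constructor
  · intro hM
    by_contra! h
    obtain ⟨hv, hw⟩ := h
    have hu_mem : u ∈ LinearMap.range M.mulVecLin :=
      ⟨(v ⬝ᵥ v)⁻¹ • v, by
        rw [mulVecLin_apply, mulVec_smul, vecMulVec_add_vecMulVec_mulVec_right huv, smul_smul,
          inv_mul_cancel₀ (dotProduct_self_eq_zero.not.mpr hv), one_smul]⟩
    have hw_mem : w ∈ LinearMap.range M.mulVecLin :=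
      ⟨(u ⬝ᵥ u)⁻¹ • u, by
        rw [mulVecLin_apply, mulVec_smul, vecMulVec_add_vecMulVec_mulVec_left huv, smul_smul,
          inv_mul_cancel₀ (dotProduct_self_eq_zero.not.mpr hu), one_smul]⟩
    have hind : LinearIndependent K ![u, w] :=
      (LinearIndependent.pair_iff' hu).mpr fun c hc => hw c hc.symm
    have := M.two_le_rank_of_linearIndependent hu_mem hw_mem hind
    omega
  · rintro (rfl | ⟨c, rfl⟩)
    · simpa [M] using rank_vecMulVec_le w u
    · simpa [M, ← vecMulVec_smul, ← vecMulVec_add] using rank_vecMulVec_le u (v + c • u)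

end Matrix

theorem perturbation_rank_le_one_iff
    (n : ℕ) (Y : Matrix (Fin n) (Fin n) ℝ) (u : Fin n → ℝ) (hu : u ⬝ᵥ u = 1) :
    (-(vecMulVec u u * Y) - Y * vecMulVec u u +
        vecMulVec u u * Y * vecMulVec u u).rank ≤ 1 ↔
      (∃ c : ℝ, Y.mulVec u = c • u) ∨ (∃ c : ℝ, Yᵀ.mulVec u = c • u) := by
  set v := u ᵥ* Y - ((u ᵥ* Y) ⬝ᵥ u) • u
  have hΔ : -(vecMulVec u u * Y) - Y * vecMulVec u u + vecMulVec u u * Y * vecMulVec u u =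
      -(vecMulVec u v + vecMulVec (Y *ᵥ u) u) := by
    rw [vecMulVec_mul, mul_vecMulVec, vecMulVec_mul_vecMulVec, vecMulVec_sub]
    abel
  have hu0 : u ≠ 0 := by rintro rfl; simp at hu
  rw [hΔ, rank_neg, rank_vecMulVec_add_vecMulVec_le_one_iff _ hu0
    (dotProduct_sub_dotProduct_smul_eq_zero hu _), sub_dotProduct_smul_eq_zero_iff hu,
    mulVec_transpose, or_comm]
end

section
/- Let J be skew-symmetric and X₀, …, X_ℓ symmetric positive semidefinite, all real n×n. Suppose Δ_J, Δ_{X₀}, …, Δ_{X_ℓ} are perturbations with Δ_J skew-symmetric, each Δ_{X_i} symmetric with X_i + Δ_{X_i} still positive semidefinite, and such that the kernels of J + Δ_J and the X_i + Δ_{X_i} have a nontrivial common intersection. Then there exists a unit vector u ∈ ℝⁿ such that the structured perturbations Δ_J^u = −uuᵀJ − Juuᵀ and Δ_{X_i}^u = −uuᵀX_i − X_i uuᵀ + uuᵀX_i uuᵀ satisfy ‖Δ_J^u‖_F ≤ ‖Δ_J‖_F and ‖Δ_{X_i}^u‖_F ≤ ‖Δ_{X_i}‖_F for all i. -/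
/-!
Let `u` be a unit vector in the common kernel and `Q = 1 - uuᵀ`. Both structured perturbations
have the form `QMQ - M` (for `J` because `uᵀJu = 0` by skew-symmetry). Since `M + Δ` is
symmetric or skew-symmetric and kills `u`, it is fixed by `A ↦ QAQ`, so `QMQ - M = Δ - QΔQ`;
and `Δ - QΔQ` is Frobenius-orthogonal to `QΔQ`, hence no larger than `Δ`.
-/

open Matrix

namespace StructuredPerturbation

variable {m n ι : Type*} [Fintype m] [Fintype n] [Fintype ι]

theorem sum_sum_sq_eq_trace_transpose_mul_self (A : Matrix m n ℝ) :
    ∑ i, ∑ j, A i j ^ 2 = trace (Aᵀ * A) := by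
  simp only [trace, diag_apply, mul_apply, transpose_apply, sq]
  exact Finset.sum_comm

theorem trace_transpose_mul_self_add {A B : Matrix m n ℝ} (h : trace (Aᵀ * B) = 0) :
    trace ((A + B)ᵀ * (A + B)) = trace (Aᵀ * A) + trace (Bᵀ * B) := by
  have h' : trace (Bᵀ * A) = 0 := by
    rw [← trace_transpose, transpose_mul, transpose_transpose, h]
  rw [transpose_add, Matrix.add_mul, Matrix.mul_add, Matrix.mul_add, trace_add, trace_add,
    trace_add, h, h']
  ring

theorem trace_transpose_mul_self_nonneg (A : Matrix m n ℝ) : 0 ≤ trace (Aᵀ * A) := by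
  rw [← sum_sum_sq_eq_trace_transpose_mul_self]
  positivity

/-- Pythagoras for the orthogonal splitting `Δ = (Δ - QΔQ) + QΔQ`. -/
theorem trace_sub_compress_le {Q : Matrix ι ι ℝ} (hQt : Qᵀ = Q) (hQ : IsIdempotentElem Q)
    (Δ : Matrix ι ι ℝ) :
    trace ((Δ - Q * Δ * Q)ᵀ * (Δ - Q * Δ * Q)) ≤ trace (Δᵀ * Δ) := by
  have horth : trace ((Δ - Q * Δ * Q)ᵀ * (Q * Δ * Q)) = 0 := by
    have hsq : (Q * Δ * Q)ᵀ * (Q * Δ * Q) = Q * (Δᵀ * Q * Δ * Q) := by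
      simp only [transpose_mul, hQt, Matrix.mul_assoc, ← Matrix.mul_assoc Q Q, hQ.eq]
    rw [transpose_sub, sub_mul, trace_sub, hsq, trace_mul_comm Q, Matrix.mul_assoc _ Q Q,
      hQ.eq, ← Matrix.mul_assoc, ← Matrix.mul_assoc, sub_self]
  have hpyth := trace_transpose_mul_self_add horth
  rw [sub_add_cancel] at hpyth
  linarith [trace_transpose_mul_self_nonneg (Q * Δ * Q)]

theorem trace_compress_sub_le {Q M Δ : Matrix ι ι ℝ} (hQt : Qᵀ = Q) (hQ : IsIdempotentElem Q)
    (hMΔ : Q * (M + Δ) * Q = M + Δ) :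
    trace ((Q * M * Q - M)ᵀ * (Q * M * Q - M)) ≤ trace (Δᵀ * Δ) := by
  have hswap : Q * M * Q - M = Δ - Q * Δ * Q := by
    rw [Matrix.mul_add, Matrix.add_mul] at hMΔ
    linear_combination (norm := abel_nf) hMΔ
  rw [hswap]
  exact trace_sub_compress_le hQt hQ Δ

theorem dotProduct_mulVec_self_eq_zero {A : Matrix ι ι ℝ} (hA : Aᵀ = -A) (u : ι → ℝ) :
    u ⬝ᵥ A *ᵥ u = 0 := by
  have h : u ⬝ᵥ A *ᵥ u = -(u ⬝ᵥ A *ᵥ u) := by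
    conv_lhs => rw [dotProduct_mulVec, ← mulVec_transpose, hA, neg_mulVec, dotProduct_comm,
      dotProduct_neg]
  linarith

theorem exists_smul_dotProduct_self_eq_one {x : ι → ℝ} (hx : x ≠ 0) :
    ∃ c : ℝ, (c • x) ⬝ᵥ (c • x) = 1 := by
  have hpos : 0 < x ⬝ᵥ x := by simpa using dotProduct_self_star_pos_iff.mpr hx
  refine ⟨(√(x ⬝ᵥ x))⁻¹, ?_⟩
  rw [smul_dotProduct, dotProduct_smul, smul_eq_mul, smul_eq_mul, ← mul_assoc, ← mul_inv,
    Real.mul_self_sqrt hpos.le, inv_mul_cancel₀ hpos.ne']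

variable [DecidableEq ι]

theorem compress_one_sub_vecMulVec_eq_self {A : Matrix ι ι ℝ} {u : ι → ℝ}
    (hr : A *ᵥ u = 0) (hl : u ᵥ* A = 0) :
    (1 - vecMulVec u u) * A * (1 - vecMulVec u u) = A := by
  have hPA : vecMulVec u u * A = 0 := by rw [vecMulVec_mul, hl, vecMulVec_zero]
  have hAP : A * vecMulVec u u = 0 := by rw [mul_vecMulVec, hr, zero_vecMulVec]
  simp only [sub_mul, mul_sub, one_mul, mul_one, hPA, hAP]
  simp

theorem sum_sq_compress_sub_le {u : ι → ℝ} (hu : u ⬝ᵥ u = 1) {M Δ : Matrix ι ι ℝ}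
    (hr : (M + Δ) *ᵥ u = 0) (hl : u ᵥ* (M + Δ) = 0) :
    ∑ i, ∑ j, ((1 - vecMulVec u u) * M * (1 - vecMulVec u u) - M) i j ^ 2 ≤
      ∑ i, ∑ j, Δ i j ^ 2 := by
  have hQt : (1 - vecMulVec u u)ᵀ = 1 - vecMulVec u u := by
    rw [transpose_sub, transpose_one, transpose_vecMulVec]
  have hQ : IsIdempotentElem (1 - vecMulVec u u) := by
    refine IsIdempotentElem.one_sub ?_
    rw [IsIdempotentElem, vecMulVec_mul_vecMulVec, hu, one_smul]
  simp only [sum_sum_sq_eq_trace_transpose_mul_self]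
  exact trace_compress_sub_le hQt hQ (compress_one_sub_vecMulVec_eq_self hr hl)

end StructuredPerturbation

open StructuredPerturbation in
theorem structured_perturbation_optimal_general
    (n ℓ : ℕ) (J : Matrix (Fin n) (Fin n) ℝ)
    (Xm : Fin (ℓ + 1) → Matrix (Fin n) (Fin n) ℝ)
    (hJ : Jᵀ = -J)
    (ΔJ : Matrix (Fin n) (Fin n) ℝ) (ΔX : Fin (ℓ + 1) → Matrix (Fin n) (Fin n) ℝ)
    (hΔJ : ΔJᵀ = -ΔJ)
    (hΔXpsd : ∀ i, (Xm i + ΔX i).PosSemidef)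
    (hker : ∃ x : Fin n → ℝ, x ≠ 0 ∧ (J + ΔJ).mulVec x = 0 ∧
        ∀ i, (Xm i + ΔX i).mulVec x = 0) :
    ∃ u : Fin n → ℝ, u ⬝ᵥ u = 1 ∧
      (∑ i, ∑ j, ((-(vecMulVec u u * J) - J * vecMulVec u u) i j) ^ 2) ≤
        (∑ i, ∑ j, (ΔJ i j) ^ 2) ∧
      ∀ m, (∑ i, ∑ j, ((-(vecMulVec u u * Xm m) - Xm m * vecMulVec u u +
          vecMulVec u u * Xm m * vecMulVec u u) i j) ^ 2) ≤
        (∑ i, ∑ j, (ΔX m i j) ^ 2) := by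
  obtain ⟨x, hx, hxJ, hxX⟩ := hker
  obtain ⟨c, hu⟩ := exists_smul_dotProduct_self_eq_one hx
  set u := c • x
  have huJ : (J + ΔJ) *ᵥ u = 0 := by rw [mulVec_smul, hxJ, smul_zero]
  have huX (m) : (Xm m + ΔX m) *ᵥ u = 0 := by rw [mulVec_smul, hxX m, smul_zero]
  set P := vecMulVec u u
  refine ⟨u, hu, ?_, fun m => ?_⟩
  · have hPJP : P * J * P = 0 := by
      rw [vecMulVec_mul, vecMulVec_mul_vecMulVec, ← dotProduct_mulVec,
        dotProduct_mulVec_self_eq_zero hJ, zero_smul, vecMulVec_zero]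
    have hl : u ᵥ* (J + ΔJ) = 0 := by
      rw [← mulVec_transpose, transpose_add, hJ, hΔJ, ← neg_add, neg_mulVec, huJ, neg_zero]
    have hJcompress : -(P * J) - J * P = (1 - P) * J * (1 - P) - J := by
      linear_combination (norm := noncomm_ring) -hPJP
    rw [hJcompress]
    exact sum_sq_compress_sub_le hu huJ hl
  · have hl : u ᵥ* (Xm m + ΔX m) = 0 := by
      rw [← mulVec_transpose, (isHermitian_iff_isSymm.mp (hΔXpsd m).isHermitian).eq, huX m]
    have hXcompress :
        -(P * Xm m) - Xm m * P + P * Xm m * P = (1 - P) * Xm m * (1 - P) - Xm m := by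
      noncomm_ring
    rw [hXcompress]
    exact sum_sq_compress_sub_le hu (huX m) hl

theorem structured_perturbation_optimal
    (n ℓ : ℕ) (J : Matrix (Fin n) (Fin n) ℝ)
    (Xm : Fin (ℓ + 1) → Matrix (Fin n) (Fin n) ℝ)
    (hJ : Jᵀ = -J) (hX : ∀ i, (Xm i).PosSemidef)
    (ΔJ : Matrix (Fin n) (Fin n) ℝ) (ΔX : Fin (ℓ + 1) → Matrix (Fin n) (Fin n) ℝ)
    (hΔJ : ΔJᵀ = -ΔJ) (hΔXsymm : ∀ i, (ΔX i)ᵀ = ΔX i)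
    (hΔXpsd : ∀ i, (Xm i + ΔX i).PosSemidef)
    (hker : ∃ x : Fin n → ℝ, x ≠ 0 ∧ (J + ΔJ).mulVec x = 0 ∧
        ∀ i, (Xm i + ΔX i).mulVec x = 0) :
    ∃ u : Fin n → ℝ, u ⬝ᵥ u = 1 ∧
      (∑ i, ∑ j, ((-(vecMulVec u u * J) - J * vecMulVec u u) i j) ^ 2) ≤
        (∑ i, ∑ j, (ΔJ i j) ^ 2) ∧
      ∀ m, (∑ i, ∑ j, ((-(vecMulVec u u * Xm m) - Xm m * vecMulVec u u +
          vecMulVec u u * Xm m * vecMulVec u u) i j) ^ 2) ≤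
        (∑ i, ∑ j, (ΔX m i j) ^ 2) :=
  structured_perturbation_optimal_general n ℓ J Xm hJ ΔJ ΔX hΔJ hΔXpsd hker
end
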